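/- arXiv:1508.05631 — 4 statements merged into one kernel-verified Lean document; each statement's English description precedes it below -/
import Mathlib

section
/- Suppose y ∈ H and L > 0 satisfy F(p_L(y)) ≤ Q_L(p_L(y), y). Then for every x ∈ H, F(x) − F(p_L(y)) ≥ (L/2)‖p_L(y) − y‖² + L⟨p_L(y) − y, y − x⟩ (an inequality in the extended reals; here F(p_L(y)) is finite). -/
/-!
The minimality of `p` for `Q_L(·, y)` gives, by the first-order optimality condition for the sum
of the smooth quadratic model and the convex function `g`, the variational inequality
`g p - g x ≤ ⟪f' y + L (p - y), x - p⟫`. Adding the gradient inequality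
`f y + ⟪f' y, x - y⟫ ≤ f x` for the convex function `f` and the hypothesis `F p ≤ Q_L(p, y)`
yields the claim after expanding the inner products.
-/

open scoped RealInnerProductSpace
open AffineMap Set

theorem ne_top_of_forall_coe_add_le {α : Type*} {q : α → ℝ} {g : α → EReal} {p x₀ : α}
    (hmin : ∀ z, (q p : EReal) + g p ≤ q z + g z) (hx₀ : g x₀ ≠ ⊤) : g p ≠ ⊤ := by
  intro hp
  have h := hmin x₀
  rw [hp, EReal.coe_add_top, top_le_iff] at h
  exact EReal.add_lt_top (EReal.coe_ne_top _) hx₀ |>.ne h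

section

variable {H : Type*} [NormedAddCommGroup H] [InnerProductSpace ℝ H] [CompleteSpace H]

theorem HasGradientAt.hasDerivAt_comp_lineMap {f : H → ℝ} {v a : H} (hf : HasGradientAt f v a)
    (b : H) : HasDerivAt (f ∘ lineMap (k := ℝ) a b) ⟪v, b - a⟫ 0 := by
  have hf' : HasFDerivAt f (InnerProductSpace.toDual ℝ H v) (lineMap a b (0 : ℝ)) := by
    simpa using hasGradientAt_iff_hasFDerivAt.mp hf
  simpa using hf'.comp_hasDerivAt (0 : ℝ) hasDerivAt_lineMap

theorem ConvexOn.add_inner_le_of_hasGradientAt {f : H → ℝ} {v y : H}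
    (hf : ConvexOn ℝ univ f) (hv : HasGradientAt f v y) (x : H) : f y + ⟪v, x - y⟫ ≤ f x := by
  have h := (hf.comp_affineMap (lineMap (k := ℝ) y x)).le_slope_of_hasDerivAt (mem_univ 0)
    (mem_univ 1) zero_lt_one (hv.hasDerivAt_comp_lineMap x)
  simp only [slope_def_field, Function.comp_apply, lineMap_apply_one, lineMap_apply_zero,
    sub_zero, div_one] at h
  linarith

/-- `Q_L(x, y) - g x`. -/
noncomputable def quadraticModel (f : H → ℝ) (f' : H → H) (L : ℝ) (y x : H) : ℝ :=
  f y + ⟪f' y, x - y⟫ + L / 2 * ‖x - y‖ ^ 2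

theorem hasGradientAt_quadraticModel (f : H → ℝ) (f' : H → H) (L : ℝ) (y p : H) :
    HasGradientAt (quadraticModel f f' L y) (f' y + L • (p - y)) p := by
  rw [hasGradientAt_iff_hasFDerivAt]
  have hsub := (hasFDerivAt_id (𝕜 := ℝ) p).sub_const y
  refine ((((hasFDerivAt_const (f' y) p).inner ℝ hsub).const_add (f y)).add
    (hsub.norm_sq.const_mul (L / 2))).congr_fderiv ?_
  ext w
  simp [← mul_assoc]

/-- First-order optimality condition for a minimizer of `q + g` with `q` differentiable and
`g` convex, at points where `g` is finite. -/
theorem HasGradientAt.sub_le_inner_of_forall_coe_add_le {q : H → ℝ} {g : H → EReal}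
    {w p x : H} {gp gx : ℝ}
    (hgconv : ∀ x y : H, ∀ a b : ℝ, 0 ≤ a → 0 ≤ b → a + b = 1 →
      g (a • x + b • y) ≤ (a : EReal) * g x + (b : EReal) * g y)
    (hq : HasGradientAt q w p) (hmin : ∀ z, (q p : EReal) + g p ≤ q z + g z)
    (hp : g p = gp) (hx : g x = gx) : gp - gx ≤ ⟪w, x - p⟫ := by
  have hslope : ∀ t ∈ Ioc (0 : ℝ) 1, gp - gx ≤ slope (q ∘ lineMap (k := ℝ) p x) 0 t := by
    rintro t ⟨ht0, ht1⟩
    have h := (hmin (lineMap p x t)).trans <| add_le_add_right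
      (lineMap_apply_module p x t ▸ hgconv p x (1 - t) t (by linarith) ht0.le (by ring)) _
    rw [hp, hx] at h
    norm_cast at h
    rw [slope_def_field, sub_zero, le_div_iff₀ ht0]
    simp only [Function.comp_apply, lineMap_apply_zero]
    linarith
  refine ge_of_tendsto ((hasDerivWithinAt_iff_tendsto_slope' self_notMem_Ioi).mp
    (hq.hasDerivAt_comp_lineMap x).hasDerivWithinAt) ?_
  filter_upwards [Ioc_mem_nhdsGT zero_lt_one] with t ht using hslope t ht

end

theorem key_inequality_general
    {H : Type*} [NormedAddCommGroup H] [InnerProductSpace ℝ H] [CompleteSpace H]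
    (f : H → ℝ) (f' : H → H) (g : H → EReal)
    (hfconv : ConvexOn ℝ Set.univ f)
    (hdiff : ∀ x : H, HasGradientAt f (f' x) x)
    (hgbot : ∀ x : H, g x ≠ ⊥) (hgproper : ∃ x : H, g x ≠ ⊤)
    (hgconv : ∀ x y : H, ∀ a b : ℝ, 0 ≤ a → 0 ≤ b → a + b = 1 →
      g (a • x + b • y) ≤ (a : EReal) * g x + (b : EReal) * g y)
    (y : H) (L : ℝ) (p : H)
    (hpmin : ∀ x : H,
      ((f y + ⟪f' y, p - y⟫ + (L / 2) * ‖p - y‖ ^ 2 : ℝ) : EReal) + g p ≤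
        ((f y + ⟪f' y, x - y⟫ + (L / 2) * ‖x - y‖ ^ 2 : ℝ) : EReal) + g x)
    (hFQ : (f p : EReal) + g p ≤
      ((f y + ⟪f' y, p - y⟫ + (L / 2) * ‖p - y‖ ^ 2 : ℝ) : EReal) + g p) :
    (∃ c : ℝ, (f p : EReal) + g p = (c : EReal)) ∧
      ∀ x : H, (f p : EReal) + g p +
          (((L / 2) * ‖p - y‖ ^ 2 + L * ⟪p - y, y - x⟫ : ℝ) : EReal) ≤
        (f x : EReal) + g x := by
  have hmin : ∀ x, (quadraticModel f f' L y p : EReal) + g p ≤ quadraticModel f f' L y x + g x :=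
    hpmin
  obtain ⟨x₀, hx₀⟩ := hgproper
  obtain ⟨gp, hgp⟩ : ∃ gp : ℝ, g p = gp :=
    ⟨_, (EReal.coe_toReal (ne_top_of_forall_coe_add_le hmin hx₀) (hgbot p)).symm⟩
  refine ⟨⟨f p + gp, by rw [hgp]; norm_cast⟩, fun x => ?_⟩
  rcases eq_or_ne (g x) ⊤ with hxt | hxt
  · rw [hxt, EReal.coe_add_top]
    exact le_top
  obtain ⟨gx, hgx⟩ : ∃ gx : ℝ, g x = gx := ⟨_, (EReal.coe_toReal hxt (hgbot x)).symm⟩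
  have hopt :=
    (hasGradientAt_quadraticModel f f' L y p).sub_le_inner_of_forall_coe_add_le hgconv hmin hgp hgx
  have hgrad := hfconv.add_inner_le_of_hasGradientAt (hdiff y) x
  rw [hgp] at hFQ
  rw [hgp, hgx]
  norm_cast at hFQ ⊢
  have hsplit : ⟪f' y, x - y⟫ = ⟪f' y, x - p⟫ + ⟪f' y, p - y⟫ := by
    rw [← inner_add_right, sub_add_sub_cancel]
  have hpolar : ⟪p - y, y - x⟫ = -‖p - y‖ ^ 2 - ⟪p - y, x - p⟫ := by
    rw [← real_inner_self_eq_norm_sq, ← inner_neg_right, ← inner_sub_right]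
    congr 1
    abel
  rw [inner_add_left, real_inner_smul_left] at hopt
  rw [hpolar]
  linarith

/-- Key inequality (Lemma 2.3 of Beck–Teboulle, Hilbert space version): if
`F(p_L(y)) ≤ Q_L(p_L(y), y)`, then `F(p_L(y))` is finite and for all `x`,
`F(x) − F(p_L(y)) ≥ (L/2)‖p_L(y) − y‖² + L⟪p_L(y) − y, y − x⟫`. -/
theorem key_inequality
    {H : Type*} [NormedAddCommGroup H] [InnerProductSpace ℝ H] [CompleteSpace H]
    (f : H → ℝ) (f' : H → H) (g : H → EReal) (Lf : ℝ) (hLf : 0 ≤ Lf)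
    (hfconv : ConvexOn ℝ Set.univ f)
    (hdiff : ∀ x : H, HasGradientAt f (f' x) x)
    (hlip : ∀ x y : H, ‖f' x - f' y‖ ≤ Lf * ‖x - y‖)
    (hgbot : ∀ x : H, g x ≠ ⊥) (hgproper : ∃ x : H, g x ≠ ⊤)
    (hgconv : ∀ x y : H, ∀ a b : ℝ, 0 ≤ a → 0 ≤ b → a + b = 1 →
      g (a • x + b • y) ≤ (a : EReal) * g x + (b : EReal) * g y)
    (hglsc : LowerSemicontinuous g)
    (y : H) (L : ℝ) (hL : 0 < L) (p : H)
    (hpmin : ∀ x : H,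
      ((f y + ⟪f' y, p - y⟫ + (L / 2) * ‖p - y‖ ^ 2 : ℝ) : EReal) + g p ≤
        ((f y + ⟪f' y, x - y⟫ + (L / 2) * ‖x - y‖ ^ 2 : ℝ) : EReal) + g x)
    (hFQ : (f p : EReal) + g p ≤
      ((f y + ⟪f' y, p - y⟫ + (L / 2) * ‖p - y‖ ^ 2 : ℝ) : EReal) + g p) :
    (∃ c : ℝ, (f p : EReal) + g p = (c : EReal)) ∧
      ∀ x : H, (f p : EReal) + g p +
          (((L / 2) * ‖p - y‖ ^ 2 + L * ⟪p - y, y - x⟫ : ℝ) : EReal) ≤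
        (f x : EReal) + g x :=
  key_inequality_general f f' g hfconv hdiff hgbot hgproper hgconv y L p hpmin hFQ
end

section
/- Let L > 0, Λ ≥ 0 and δ ≥ 1 be real numbers, let x_k, y, x̃, e ∈ H, suppose F(x_k) and F(x̃) are finite, let p := p_L(y) satisfy F(p) ≤ Q_L(p, y), set x' := p + e, and suppose F(x') is finite with F(x') − F(p) ≤ Λ‖e‖. Then, with v := F(x_k) − F(x̃) and v' := F(x') − F(x̃), one has (2/L)(δ(δ−1)v − δ²v') + 2δ²‖e‖(Λ/L + ‖x' − ((δ−1)/δ)x_k − (1/δ)x̃‖) ≥ ‖δx' − ((δ−1)x_k + x̃)‖² − ‖δy − ((δ−1)x_k + x̃)‖². -/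
open scoped RealInnerProductSpace
open Filter Topology Set

/-! The minimiser `p` of the `L`-strongly convex model `Q_L(·, y)` has quadratic growth,
`Q_L(x, y) ≥ Q_L(p, y) + (L/2)‖x - p‖²`. Together with `F(p) ≤ Q_L(p, y)` and the gradient
inequality `f(y) + ⟪f'(y), x - y⟫ ≤ f(x)` this gives `(L/2)(‖x - p‖² - ‖x - y‖²) ≤ F(x) - F(p)`
whenever `F(x)` is finite. Adding this at `x_k` and `x̃` with weights `δ(δ - 1)` and `δ` gives
the claim with `p` in place of `x'`; moving from `p` to `x' = p + e` costs at most `Λ‖e‖` in `F`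
and, by Cauchy–Schwarz, `2δ²‖e‖‖x' - ((δ-1)/δ)x_k - (1/δ)x̃‖` in the squared norm. -/

lemma EReal.eq_coe_sub_of_coe_add_eq_coe {a c : ℝ} {b : EReal} (h : (a : EReal) + b = c) :
    b = ((c - a : ℝ) : EReal) := by
  induction b with
  | bot => simp at h
  | top => simp at h
  | coe b =>
    norm_cast at h ⊢
    linarith

lemma le_of_forall_add_mul_one_sub_le {A B c : ℝ}
    (h : ∀ t ∈ Ioo (0 : ℝ) 1, A + c * (1 - t) ≤ B) : A + c ≤ B := by
  have hlim : Tendsto (fun t : ℝ ↦ A + c * (1 - t)) (𝓝[>] 0) (𝓝 (A + c)) := by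
    have hcont : ContinuousWithinAt (fun t : ℝ ↦ A + c * (1 - t)) (Ioi 0) 0 := by fun_prop
    simpa using hcont.tendsto
  exact le_of_tendsto hlim (eventually_of_mem (Ioo_mem_nhdsGT one_pos) h)

section InnerProductSpace

variable {H : Type*} [NormedAddCommGroup H] [InnerProductSpace ℝ H]

lemma norm_smul_add_smul_sq {a b : ℝ} (hab : a + b = 1) (u v : H) :
    ‖a • u + b • v‖ ^ 2 = a * ‖u‖ ^ 2 + b * ‖v‖ ^ 2 - a * b * ‖u - v‖ ^ 2 := by
  rw [norm_add_sq_real, norm_sub_sq_real, norm_smul, norm_smul, real_inner_smul_left,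
    real_inner_smul_right, Real.norm_eq_abs, Real.norm_eq_abs, mul_pow, mul_pow, sq_abs, sq_abs]
  obtain rfl := eq_sub_of_add_eq' hab
  ring

lemma sq_norm_sub_sq_norm_sub_le (w v : H) : ‖w‖ ^ 2 - ‖w - v‖ ^ 2 ≤ 2 * ‖v‖ * ‖w‖ := by
  nlinarith [norm_sub_sq_real w v, real_inner_le_norm w v, sq_nonneg ‖v‖]

lemma norm_smul_sub_sq_sub_norm_smul_sub_sq (δ : ℝ) (a b u v : H) :
    ‖δ • u - ((δ - 1) • a + b)‖ ^ 2 - ‖δ • v - ((δ - 1) • a + b)‖ ^ 2 =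
      δ * (δ - 1) * (‖a - u‖ ^ 2 - ‖a - v‖ ^ 2) + δ * (‖b - u‖ ^ 2 - ‖b - v‖ ^ 2) := by
  simp only [norm_sub_sq_real, inner_add_right, inner_smul_right, norm_smul,
    Real.norm_eq_abs, mul_pow, sq_abs, real_inner_comm a, real_inner_comm b]
  ring

lemma ConvexOn.inner_gradient_le_sub {f : H → ℝ} {f' : H → H} [CompleteSpace H]
    (hf : ConvexOn ℝ univ f) (hdiff : ∀ x, HasGradientAt f (f' x) x) (x y : H) :
    ⟪f' y, x - y⟫ ≤ f x - f y := by
  have hline : ConvexOn ℝ univ (f ∘ AffineMap.lineMap (k := ℝ) y x) := hf.comp_affineMap _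
  have hderiv : HasDerivAt (f ∘ AffineMap.lineMap (k := ℝ) y x) ⟪f' y, x - y⟫ 0 := by
    have := (hdiff y).hasFDerivAt
    rw [← AffineMap.lineMap_apply_zero (k := ℝ) y x] at this
    simpa using this.comp_hasDerivAt 0 AffineMap.hasDerivAt_lineMap
  simpa [slope_def_field] using
    hline.le_slope_of_hasDerivAt (mem_univ 0) (mem_univ 1) one_pos hderiv

lemma quadratic_growth_of_minimizer {ψ : H → ℝ} {g : H → EReal} (hψ : ConvexOn ℝ univ ψ)
    (hg : ∀ x y : H, ∀ a b : ℝ, 0 ≤ a → 0 ≤ b → a + b = 1 →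
      g (a • x + b • y) ≤ (a : EReal) * g x + (b : EReal) * g y)
    {L : ℝ} {y p x : H} {Gp Gx : ℝ} (hgp : g p = Gp) (hgx : g x = Gx)
    (hmin : ∀ w : H, ((ψ p + L / 2 * ‖p - y‖ ^ 2 : ℝ) : EReal) + g p ≤
      ((ψ w + L / 2 * ‖w - y‖ ^ 2 : ℝ) : EReal) + g w) :
    ψ p + L / 2 * ‖p - y‖ ^ 2 + Gp + L / 2 * ‖x - p‖ ^ 2 ≤ ψ x + L / 2 * ‖x - y‖ ^ 2 + Gx := by
  -- With `Q := ψ + (L/2)‖· - y‖² + g` and `w` on the segment `[p, x]`, strong convexity gives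
  -- `Q p ≤ Q w ≤ (1 - t) Q p + t Q x - (L/2) t (1 - t) ‖x - p‖²`; divide by `t` and let `t → 0`.
  refine le_of_forall_add_mul_one_sub_le fun t ⟨ht0, ht1⟩ ↦ ?_
  set w := (1 - t) • p + t • x
  have hgw : g w ≤ (((1 - t) * Gp + t * Gx : ℝ) : EReal) := by
    have := hg p x (1 - t) t (by linarith) ht0.le (by ring)
    rwa [hgp, hgx, ← EReal.coe_mul, ← EReal.coe_mul, ← EReal.coe_add] at this
  have hqw : ψ p + L / 2 * ‖p - y‖ ^ 2 + Gp ≤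
      ψ w + L / 2 * ‖w - y‖ ^ 2 + ((1 - t) * Gp + t * Gx) := by
    have := (hmin w).trans (add_le_add_right hgw _)
    rw [hgp] at this
    exact_mod_cast this
  have hψw : ψ w ≤ (1 - t) * ψ p + t * ψ x :=
    hψ.2 (mem_univ p) (mem_univ x) (by linarith) ht0.le (by ring)
  have hnorm : ‖w - y‖ ^ 2 =
      (1 - t) * ‖p - y‖ ^ 2 + t * ‖x - y‖ ^ 2 - (1 - t) * t * ‖x - p‖ ^ 2 := by
    rw [show w - y = (1 - t) • (p - y) + t • (x - y) by module,
      norm_smul_add_smul_sq (by ring), sub_sub_sub_cancel_right, norm_sub_rev p x]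
  refine le_of_mul_le_mul_left ?_ ht0
  linear_combination hqw + hψw + L / 2 * hnorm

lemma prox_grad_key_inequality [CompleteSpace H] {f : H → ℝ} {f' : H → H} {g : H → EReal}
    (hf : ConvexOn ℝ univ f) (hdiff : ∀ x : H, HasGradientAt f (f' x) x)
    (hg : ∀ x y : H, ∀ a b : ℝ, 0 ≤ a → 0 ≤ b → a + b = 1 →
      g (a • x + b • y) ≤ (a : EReal) * g x + (b : EReal) * g y)
    {L : ℝ} {y p : H} {Fp : ℝ}
    (hpmin : ∀ x : H,
      ((f y + ⟪f' y, p - y⟫ + (L / 2) * ‖p - y‖ ^ 2 : ℝ) : EReal) + g p ≤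
        ((f y + ⟪f' y, x - y⟫ + (L / 2) * ‖x - y‖ ^ 2 : ℝ) : EReal) + g x)
    (hFQ : (f p : EReal) + g p ≤
      ((f y + ⟪f' y, p - y⟫ + (L / 2) * ‖p - y‖ ^ 2 : ℝ) : EReal) + g p)
    (hFp : (f p : EReal) + g p = Fp) {x : H} {Fx : ℝ} (hFx : (f x : EReal) + g x = Fx) :
    L / 2 * (‖x - p‖ ^ 2 - ‖x - y‖ ^ 2) ≤ Fx - Fp := by
  have hgp := EReal.eq_coe_sub_of_coe_add_eq_coe hFp
  have hgx := EReal.eq_coe_sub_of_coe_add_eq_coe hFx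
  have hlin : ConvexOn ℝ univ fun w ↦ f y + ⟪f' y, w - y⟫ := by
    refine ⟨convex_univ, fun u _ v _ a b _ _ hab ↦ le_of_eq ?_⟩
    obtain rfl := eq_sub_of_add_eq hab
    have : (1 - b) • u + b • v - y = (1 - b) • (u - y) + b • (v - y) := by module
    simp only [this, inner_add_right, real_inner_smul_right, smul_eq_mul]
    ring
  have hgrowth := quadratic_growth_of_minimizer hlin hg hgp hgx hpmin
  rw [hgp] at hFQ
  norm_cast at hFQ
  linarith [hf.inner_gradient_le_sub hdiff x y]

end InnerProductSpace

theorem perturbed_fista_step_inequality_general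
    {H : Type*} [NormedAddCommGroup H] [InnerProductSpace ℝ H] [CompleteSpace H]
    (f : H → ℝ) (f' : H → H) (g : H → EReal)
    (hfconv : ConvexOn ℝ Set.univ f)
    (hdiff : ∀ x : H, HasGradientAt f (f' x) x)
    (hgconv : ∀ x y : H, ∀ a b : ℝ, 0 ≤ a → 0 ≤ b → a + b = 1 →
      g (a • x + b • y) ≤ (a : EReal) * g x + (b : EReal) * g y)
    (L Λ δ : ℝ) (hL : 0 < L) (hδ : 1 ≤ δ)
    (xk y xt e p x' : H)
    (Fxk Fxt Fx' Fp : ℝ)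
    (hFxk : (f xk : EReal) + g xk = (Fxk : EReal))
    (hFxt : (f xt : EReal) + g xt = (Fxt : EReal))
    (hpmin : ∀ x : H,
      ((f y + ⟪f' y, p - y⟫ + (L / 2) * ‖p - y‖ ^ 2 : ℝ) : EReal) + g p ≤
        ((f y + ⟪f' y, x - y⟫ + (L / 2) * ‖x - y‖ ^ 2 : ℝ) : EReal) + g x)
    (hFQ : (f p : EReal) + g p ≤
      ((f y + ⟪f' y, p - y⟫ + (L / 2) * ‖p - y‖ ^ 2 : ℝ) : EReal) + g p)
    (hFp : (f p : EReal) + g p = (Fp : EReal))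
    (hx' : x' = p + e)
    (hFe : Fx' - Fp ≤ Λ * ‖e‖) :
    (2 / L) * (δ * (δ - 1) * (Fxk - Fxt) - δ ^ 2 * (Fx' - Fxt)) +
        2 * δ ^ 2 * ‖e‖ * (Λ / L + ‖x' - ((δ - 1) / δ) • xk - (1 / δ) • xt‖) ≥
      ‖δ • x' - ((δ - 1) • xk + xt)‖ ^ 2 - ‖δ • y - ((δ - 1) • xk + xt)‖ ^ 2 := by
  have hδ0 : 0 < δ := one_pos.trans_le hδ
  set z := (δ - 1) • xk + xt
  set M := ‖x' - ((δ - 1) / δ) • xk - (1 / δ) • xt‖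
  have hkeyk := prox_grad_key_inequality hfconv hdiff hgconv hpmin hFQ hFp hFxk
  have hkeyt := prox_grad_key_inequality hfconv hdiff hgconv hpmin hFQ hFp hFxt
  have hdescent : ‖δ • p - z‖ ^ 2 - ‖δ • y - z‖ ^ 2 ≤
      2 / L * (δ * (δ - 1) * (Fxk - Fp) + δ * (Fxt - Fp)) := by
    have hw : 0 ≤ δ * (δ - 1) := mul_nonneg hδ0.le (by linarith)
    calc ‖δ • p - z‖ ^ 2 - ‖δ • y - z‖ ^ 2
        = 2 / L * (δ * (δ - 1) * (L / 2 * (‖xk - p‖ ^ 2 - ‖xk - y‖ ^ 2)) +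
            δ * (L / 2 * (‖xt - p‖ ^ 2 - ‖xt - y‖ ^ 2))) := by
          rw [norm_smul_sub_sq_sub_norm_smul_sub_sq]
          field_simp
      _ ≤ 2 / L * (δ * (δ - 1) * (Fxk - Fp) + δ * (Fxt - Fp)) := by gcongr
  have hnorm : ‖δ • x' - z‖ = δ * M := by
    have : δ • x' - z = δ • (x' - ((δ - 1) / δ) • xk - (1 / δ) • xt) := by
      rw [smul_sub, smul_sub, smul_smul, smul_smul, mul_div_cancel₀ _ hδ0.ne',
        mul_one_div_cancel hδ0.ne', one_smul, sub_sub]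
    rw [this, norm_smul, Real.norm_eq_abs, abs_of_pos hδ0]
  have hperturb : ‖δ • x' - z‖ ^ 2 - ‖δ • p - z‖ ^ 2 ≤ 2 * δ ^ 2 * ‖e‖ * M := by
    have := sq_norm_sub_sq_norm_sub_le (δ • x' - z) (δ • e)
    rw [show δ • x' - z - δ • e = δ • p - z by rw [hx', smul_add]; abel, hnorm, norm_smul,
      Real.norm_eq_abs, abs_of_pos hδ0] at this
    rw [hnorm]
    linear_combination this
  linear_combination hperturb + hdescent + 2 / L * δ ^ 2 * hFe

/-- The main per-step inequality of the perturbed FISTA analysis (Step 1–2 of the proof of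
the convergence theorem), combining the key inequality at `x_k` and at `x̃` with weights
`γ = δ − 1` and the Lipschitz bound `F(x') − F(p) ≤ Λ‖e‖` on the perturbation. -/
theorem perturbed_fista_step_inequality
    {H : Type*} [NormedAddCommGroup H] [InnerProductSpace ℝ H] [CompleteSpace H]
    (f : H → ℝ) (f' : H → H) (g : H → EReal) (Lf : ℝ) (hLf : 0 ≤ Lf)
    (hfconv : ConvexOn ℝ Set.univ f)
    (hdiff : ∀ x : H, HasGradientAt f (f' x) x)
    (hlip : ∀ x y : H, ‖f' x - f' y‖ ≤ Lf * ‖x - y‖)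
    (hgbot : ∀ x : H, g x ≠ ⊥) (hgproper : ∃ x : H, g x ≠ ⊤)
    (hgconv : ∀ x y : H, ∀ a b : ℝ, 0 ≤ a → 0 ≤ b → a + b = 1 →
      g (a • x + b • y) ≤ (a : EReal) * g x + (b : EReal) * g y)
    (hglsc : LowerSemicontinuous g)
    (L Λ δ : ℝ) (hL : 0 < L) (hΛ : 0 ≤ Λ) (hδ : 1 ≤ δ)
    (xk y xt e p x' : H)
    (Fxk Fxt Fx' Fp : ℝ)
    (hFxk : (f xk : EReal) + g xk = (Fxk : EReal))
    (hFxt : (f xt : EReal) + g xt = (Fxt : EReal))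
    (hpmin : ∀ x : H,
      ((f y + ⟪f' y, p - y⟫ + (L / 2) * ‖p - y‖ ^ 2 : ℝ) : EReal) + g p ≤
        ((f y + ⟪f' y, x - y⟫ + (L / 2) * ‖x - y‖ ^ 2 : ℝ) : EReal) + g x)
    (hFQ : (f p : EReal) + g p ≤
      ((f y + ⟪f' y, p - y⟫ + (L / 2) * ‖p - y‖ ^ 2 : ℝ) : EReal) + g p)
    (hFp : (f p : EReal) + g p = (Fp : EReal))
    (hx' : x' = p + e)
    (hFx' : (f x' : EReal) + g x' = (Fx' : EReal))
    (hFe : Fx' - Fp ≤ Λ * ‖e‖) :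
    (2 / L) * (δ * (δ - 1) * (Fxk - Fxt) - δ ^ 2 * (Fx' - Fxt)) +
        2 * δ ^ 2 * ‖e‖ * (Λ / L + ‖x' - ((δ - 1) / δ) • xk - (1 / δ) • xt‖) ≥
      ‖δ • x' - ((δ - 1) • xk + xt)‖ ^ 2 - ‖δ • y - ((δ - 1) • xk + xt)‖ ^ 2 :=
  perturbed_fista_step_inequality_general f f' g hfconv hdiff hgconv L Λ δ hL hδ xk y xt e p x' Fxk
    Fxt Fx' Fp hFxk hFxt hpmin hFQ hFp hx' hFe
end

section
/- Let F : H → (−∞,∞] be proper, let (x_k)_{k≥1} be a sequence in H with F(x_k) finite for all k ≥ 2 and F(x_1) < ∞, let (s_j)_{j≥2} be nonnegative reals, and let C > 0, a ≥ 0 and u ∈ H. Suppose that for every x̃ ∈ H with F(x̃) < ∞ and every k ≥ 1: F(x_{k+1}) − F(x̃) ≤ C(a(F(x_1) − F(x̃)) + ‖u − x̃‖² + Σ_{j=2}^{k+1} s_j)/(k+1)². If lim_{k→∞} (Σ_{j=2}^{k+1} s_j)/(k+1)² = 0, then lim_{k→∞} F(x_k) = inf_{x∈H} F(x) (as a limit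 in the extended reals [−∞,∞]; in particular this holds also when inf_H F = −∞). -/
/-!
Since every `F (x k)` is at least `inf F`, it suffices to bound `limsup F (x k)` by `F z` for
each `z`. This is trivial when `F z = ⊤`; when `F z` is finite, the rate estimate with `x̃ = z`
bounds `F (x (k + 1))` by `F z` plus a term `C (A + Σ s_j) / (k + 1)²`, which tends to `0`
because `A / (k + 1)² → 0` and, by hypothesis, `Σ s_j / (k + 1)² → 0`.
-/

open Filter Topology

section Order

variable {α ι : Type*} [CompleteLinearOrder α] [TopologicalSpace α] [OrderTopology α]
  {l : Filter ι}

theorem tendsto_iInf_of_forall_limsup_le {β : Type*} (F : β → α) (x : ι → β)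
    (h : ∀ z, limsup (fun i => F (x i)) l ≤ F z) :
    Tendsto (fun i => F (x i)) l (𝓝 (⨅ z, F z)) :=
  tendsto_of_le_liminf_of_limsup_le
    (le_liminf_of_le (by isBoundedDefault) (.of_forall fun i => iInf_le F (x i))) (le_iInf h)

theorem limsup_le_of_eventually_le_of_tendsto [l.NeBot] {f g : ι → α} {c : α}
    (hfg : f ≤ᶠ[l] g) (hg : Tendsto g l (𝓝 c)) : limsup f l ≤ c :=
  hg.limsup_eq ▸ limsup_le_limsup hfg

end Order

theorem tendsto_const_add_div_of_tendsto_div {ι : Type*} {l : Filter ι} {S d : ι → ℝ} (A : ℝ)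
    (hd : Tendsto d l atTop) (hS : Tendsto (fun i => S i / d i) l (𝓝 0)) :
    Tendsto (fun i => (A + S i) / d i) l (𝓝 0) := by
  simpa only [add_div, add_zero] using (tendsto_const_nhds.div_atTop hd).add hS

theorem tendsto_natCast_add_one_sq_atTop :
    Tendsto (fun k : ℕ => ((k : ℝ) + 1) ^ 2) atTop atTop :=
  (tendsto_pow_atTop two_ne_zero).comp
    (tendsto_atTop_add_const_right _ 1 tendsto_natCast_atTop_atTop)

theorem perturbed_fista_value_convergence_general
    {H : Type*} [NormedAddCommGroup H]
    (F : H → EReal) (hbot : ∀ z : H, F z ≠ ⊥)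
    (x : ℕ → H)
    (Fx1 : ℝ)
    (s : ℕ → ℝ)
    (C a : ℝ) (u : H)
    (hmain : ∀ xt : H, ∀ Fxt : ℝ, F xt = (Fxt : EReal) → ∀ k : ℕ, 1 ≤ k →
      F (x (k + 1)) ≤
        ((Fxt + C * (a * (Fx1 - Fxt) + ‖u - xt‖ ^ 2 +
          ∑ j ∈ Finset.Icc 2 (k + 1), s j) / ((k : ℝ) + 1) ^ 2 : ℝ) : EReal))
    (hlim : Filter.Tendsto
      (fun k : ℕ => (∑ j ∈ Finset.Icc 2 (k + 1), s j) / ((k : ℝ) + 1) ^ 2)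
      Filter.atTop (nhds 0)) :
    Filter.Tendsto (fun k : ℕ => F (x k)) Filter.atTop (nhds (⨅ z : H, F z)) := by
  refine tendsto_iInf_of_forall_limsup_le F x fun z => ?_
  rcases eq_or_ne (F z) ⊤ with hz | hz
  · exact hz ▸ le_top
  lift F z to ℝ using ⟨hz, hbot z⟩ with r hr
  have hbound : Tendsto (fun k : ℕ => r + C * (a * (Fx1 - r) + ‖u - z‖ ^ 2 +
      ∑ j ∈ Finset.Icc 2 (k + 1), s j) / ((k : ℝ) + 1) ^ 2) atTop (𝓝 r) := by
    simpa only [mul_div_assoc, mul_zero, add_zero] using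
      ((tendsto_const_add_div_of_tendsto_div _ tendsto_natCast_add_one_sq_atTop hlim).const_mul
        C).const_add r
  rw [← limsup_nat_add _ 1]
  exact limsup_le_of_eventually_le_of_tendsto
    ((eventually_ge_atTop 1).mono fun k hk => hmain z r hr.symm k hk)
    (EReal.tendsto_coe.mpr hbound)

/-- Step 8 of the convergence proof: if the rate estimate holds for every point `x̃` with
finite value and the averaged error tolerances tend to zero, then `F(x_k) → inf_H F`
in the extended reals (also when `inf F = −∞`). -/
theorem perturbed_fista_value_convergence
    {H : Type*} [NormedAddCommGroup H] [InnerProductSpace ℝ H] [CompleteSpace H]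
    (F : H → EReal) (hbot : ∀ z : H, F z ≠ ⊥) (hproper : ∃ z : H, F z ≠ ⊤)
    (x : ℕ → H)
    (Fx1 : ℝ) (hFx1 : F (x 1) = (Fx1 : EReal))
    (hfin : ∀ k : ℕ, 2 ≤ k → F (x k) ≠ ⊤)
    (s : ℕ → ℝ) (hs : ∀ j : ℕ, 2 ≤ j → 0 ≤ s j)
    (C a : ℝ) (hC : 0 < C) (ha : 0 ≤ a) (u : H)
    (hmain : ∀ xt : H, ∀ Fxt : ℝ, F xt = (Fxt : EReal) → ∀ k : ℕ, 1 ≤ k →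
      F (x (k + 1)) ≤
        ((Fxt + C * (a * (Fx1 - Fxt) + ‖u - xt‖ ^ 2 +
          ∑ j ∈ Finset.Icc 2 (k + 1), s j) / ((k : ℝ) + 1) ^ 2 : ℝ) : EReal))
    (hlim : Filter.Tendsto
      (fun k : ℕ => (∑ j ∈ Finset.Icc 2 (k + 1), s j) / ((k : ℝ) + 1) ^ 2)
      Filter.atTop (nhds 0)) :
    Filter.Tendsto (fun k : ℕ => F (x k)) Filter.atTop (nhds (⨅ z : H, F z)) :=
  perturbed_fista_value_convergence_general F hbot x Fx1 s C a u hmain hlim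
end

section
/- For every k ≥ 2, the error term satisfies ‖e_k‖ ≤ s_k/(s_1 k²). -/
open scoped RealInnerProductSpace

/-- For the perturbed constant-step FISTA, the error terms satisfy
`‖e_k‖ ≤ s_k/(s₁ k²)` for every `k ≥ 2`. -/
theorem perturbed_fista_error_decay
    {H : Type*} [NormedAddCommGroup H] [InnerProductSpace ℝ H] [CompleteSpace H]
    (f : H → ℝ) (f' : H → H) (g : H → EReal) (Lf : ℝ) (hLf : 0 ≤ Lf)
    (hfconv : ConvexOn ℝ Set.univ f)
    (hdiff : ∀ z : H, HasGradientAt f (f' z) z)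
    (hlip : ∀ z w : H, ‖f' z - f' w‖ ≤ Lf * ‖z - w‖)
    (hgbot : ∀ z : H, g z ≠ ⊥) (hgproper : ∃ z : H, g z ≠ ⊤)
    (hgconv : ∀ z w : H, ∀ a b : ℝ, 0 ≤ a → 0 ≤ b → a + b = 1 →
      g (a • z + b • w) ≤ (a : EReal) * g z + (b : EReal) * g w)
    (hglsc : LowerSemicontinuous g)
    -- constant step size rule
    (L : ℝ) (hL : 0 < L) (hLLf : Lf ≤ L)
    (x y e p : ℕ → H) (t s : ℕ → ℝ)
    (ht2 : 1 ≤ t 2)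
    (htrec : ∀ k : ℕ, 2 ≤ k → t (k + 1) = (1 + Real.sqrt (1 + 4 * t k ^ 2)) / 2)
    (hp1 : p 1 = x 1)
    (hpmin : ∀ k : ℕ, 2 ≤ k → ∀ z : H,
      ((f (y k) + ⟪f' (y k), p k - y k⟫ + (L / 2) * ‖p k - y k‖ ^ 2 : ℝ) : EReal) + g (p k) ≤
        ((f (y k) + ⟪f' (y k), z - y k⟫ + (L / 2) * ‖z - y k‖ ^ 2 : ℝ) : EReal) + g z)
    (hx : ∀ k : ℕ, 2 ≤ k → x k = p k + e k)
    (hy : ∀ k : ℕ, 2 ≤ k → y (k + 1) = x k + ((t k - 1) / t (k + 1)) • (x k - x (k - 1)))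
    -- the point x̃ with F(x̃) finite, and the bound μ on ‖x̃‖
    (xt : H) (Fxt : ℝ) (hFxt : (f xt : EReal) + g xt = (Fxt : EReal))
    (μ : ℝ) (hμ : 0 < μ) (hxtμ : ‖xt‖ ≤ μ)
    -- the error tolerance parameters
    (hs1 : 0 < s 1) (hs : ∀ k : ℕ, 2 ≤ k → 0 ≤ s k)
    -- the condition on the error terms
    (herr : ∀ k : ℕ, 2 ≤ k →
      ((∃ m M : ℝ, ∀ z ∈ Metric.closedBall (x k) (2 * s 1),
          (m : EReal) ≤ (f z : EReal) + g z ∧ (f z : EReal) + g z ≤ (M : EReal)) →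
        ∃ m M : ℝ, m < M ∧
          (∀ z ∈ Metric.closedBall (x k) (2 * s 1),
            (m : EReal) ≤ (f z : EReal) + g z ∧ (f z : EReal) + g z ≤ (M : EReal)) ∧
          ‖e k‖ ≤ min (s 1) (s k /
            (2 * t k ^ 2 * (((M - m) / s 1) / L + ‖p k‖ + ‖p (k - 1)‖ + 4 * s 1 + μ / t k)))) ∧
      ((¬ ∃ m M : ℝ, ∀ z ∈ Metric.closedBall (x k) (2 * s 1),
          (m : EReal) ≤ (f z : EReal) + g z ∧ (f z : EReal) + g z ≤ (M : EReal)) → e k = 0)) :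
    ∀ k : ℕ, 2 ≤ k → ‖e k‖ ≤ s k / (s 1 * (k : ℝ) ^ 2) := by
  have htk : ∀ k : ℕ, 2 ≤ k → (k : ℝ) / 2 ≤ t k := by
    intro k hk
    induction k with
    | zero => omega
    | succ n ih =>
      rcases Nat.lt_or_ge n 2 with hn | hn
      · have hn1 : n = 1 := by omega
        subst hn1
        norm_num
        linarith [ht2]
      · have h1 := ih hn
        rw [htrec n hn]
        have ht0 : 0 ≤ t n := le_trans (by positivity) h1
        have hsq : (2 * t n) ≤ Real.sqrt (1 + 4 * t n ^ 2) := by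
          rw [show (2 * t n) = Real.sqrt ((2 * t n) ^ 2) from
            (Real.sqrt_sq (by positivity)).symm]
          apply Real.sqrt_le_sqrt; nlinarith
        push_cast; linarith
  intro k hk
  have hkpos : (0:ℝ) < (k : ℝ) ^ 2 := by
    have : (0:ℝ) < (k : ℝ) := Nat.cast_pos.mpr (by omega)
    positivity
  have hsk := hs k hk
  have hrhs0 : 0 ≤ s k / (s 1 * (k : ℝ) ^ 2) := by positivity
  obtain ⟨h1, h2⟩ := herr k hk
  by_cases hb : ∃ m M : ℝ, ∀ z ∈ Metric.closedBall (x k) (2 * s 1),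
      (m : EReal) ≤ (f z : EReal) + g z ∧ (f z : EReal) + g z ≤ (M : EReal)
  · obtain ⟨m, M, hmM, _, hbound⟩ := h1 hb
    have htk' := htk k hk
    have htpos : 0 < t k := lt_of_lt_of_le (by positivity) htk'
    have hA : 0 ≤ ((M - m) / s 1) / L + ‖p k‖ + ‖p (k - 1)‖ + μ / t k := by
      have h1' : 0 ≤ ((M - m) / s 1) / L :=
        div_nonneg (div_nonneg (by linarith) hs1.le) hL.le
      have h2' : 0 ≤ μ / t k := div_nonneg hμ.le htpos.le
      positivity
    have ht2k : ((k : ℝ) / 2) ^ 2 ≤ t k ^ 2 := by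
      apply pow_le_pow_left₀ (by positivity) htk'
    have hσ : s 1 * (k : ℝ) ^ 2 ≤
        2 * t k ^ 2 * (((M - m) / s 1) / L + ‖p k‖ + ‖p (k - 1)‖ + 4 * s 1 + μ / t k) := by
      nlinarith [sq_nonneg (t k), mul_nonneg (mul_nonneg (by norm_num : (0:ℝ) ≤ 2)
        (sq_nonneg (t k))) hA]
    have hσpos : 0 < s 1 * (k : ℝ) ^ 2 := by positivity
    calc ‖e k‖ ≤ min (s 1) (s k /
          (2 * t k ^ 2 * (((M - m) / s 1) / L + ‖p k‖ + ‖p (k - 1)‖ + 4 * s 1 + μ / t k))) :=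
        hbound
      _ ≤ s k /
          (2 * t k ^ 2 * (((M - m) / s 1) / L + ‖p k‖ + ‖p (k - 1)‖ + 4 * s 1 + μ / t k)) :=
        min_le_right _ _
      _ ≤ s k / (s 1 * (k : ℝ) ^ 2) := by
        apply div_le_div_of_nonneg_left hsk hσpos hσ
  · rw [h2 hb]
    simpa using hrhs0
end
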